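/- Let F be a face of a smooth lattice polytope P ⊆ ℝ^n with central normal u_F and supporting value b = max_{x∈P} u_F·x, and let ε > 0. Then every vertex v of P not in F satisfies u_F·v < b − ε (so that the blow-up P_{F,ε} = P ∩ {x : u_F·x ≤ b − ε} of size ε can be performed) if and only if every edge of P with exactly one endpoint in F has lattice length strictly greater than ε. -/

import Mathlib

open Finset

/-- Real dot product of an integer vector with a real vector. -/
def dotZ {n : ℕ} (u : Fin n → ℤ) (x : Fin n → ℝ) : ℝ := ∑ i, (u i : ℝ) * x i

/-- Real dot product. -/
def dotR {n : ℕ} (u x : Fin n → ℝ) : ℝ := ∑ i, u i * x i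

/-- A point of `ℝ^n` is a lattice point if all its coordinates are integers. -/
def IsLatticePt {n : ℕ} (x : Fin n → ℝ) : Prop := ∀ i, ∃ m : ℤ, x i = (m : ℝ)

/-- A (full-dimensional) lattice polytope: the convex hull of a finite set of
lattice points whose affine span is all of `ℝ^n`. -/
def IsLatticePolytope {n : ℕ} (P : Set (Fin n → ℝ)) : Prop :=
  ∃ V : Finset (Fin n → ℝ), (∀ v ∈ V, IsLatticePt v) ∧
    P = convexHull ℝ (V : Set (Fin n → ℝ)) ∧ affineSpan ℝ P = ⊤

/-- `F` is an (exposed) face of `P`: the set of maximizers over `P` of some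
linear functional. -/
def IsFaceOf {n : ℕ} (P F : Set (Fin n → ℝ)) : Prop :=
  ∃ u : Fin n → ℝ, F = {x ∈ P | ∀ y ∈ P, dotR u y ≤ dotR u x}

/-- The dimension of a subset of `ℝ^n` (dimension of its affine hull). -/
noncomputable def dimSet {n : ℕ} (F : Set (Fin n → ℝ)) : ℕ :=
  Module.finrank ℝ (vectorSpan ℝ F)

/-- A facet of `P`: a nonempty face of dimension `n - 1`. -/
def IsFacetOf {n : ℕ} (P F : Set (Fin n → ℝ)) : Prop :=
  IsFaceOf P F ∧ F.Nonempty ∧ dimSet F + 1 = n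

/-- A vertex of `P`: a point such that `{v}` is a face. -/
def IsVertexOf {n : ℕ} (P : Set (Fin n → ℝ)) (v : Fin n → ℝ) : Prop :=
  IsFaceOf P {v}

/-- An edge of `P`: a face which is a nondegenerate segment. -/
def IsEdgeOf {n : ℕ} (P E : Set (Fin n → ℝ)) : Prop :=
  IsFaceOf P E ∧ ∃ a b : Fin n → ℝ, a ≠ b ∧ E = segment ℝ a b

/-- An integer vector is primitive if the gcd of its coordinates is 1. -/
def IsPrimitiveZ {n : ℕ} (u : Fin n → ℤ) : Prop := Finset.univ.gcd u = 1

/-- `u` is the primitive outer normal of the facet `F` of `P`. -/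
def IsFacetNormal {n : ℕ} (P F : Set (Fin n → ℝ)) (u : Fin n → ℤ) : Prop :=
  IsPrimitiveZ u ∧ IsFacetOf P F ∧
    F = {x ∈ P | ∀ y ∈ P, dotZ u y ≤ dotZ u x}

/-- `u` is the central normal vector of the face `G` of `P`: the sum of the
primitive outer normals of all the facets of `P` containing `G`. -/
def IsCentralNormal {n : ℕ} (P G : Set (Fin n → ℝ)) (u : Fin n → ℤ) : Prop :=
  ∃ (m : ℕ) (Fs : Fin m → Set (Fin n → ℝ)) (us : Fin m → Fin n → ℤ),
    Function.Injective Fs ∧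
    (∀ i, G ⊆ Fs i ∧ IsFacetNormal P (Fs i) (us i)) ∧
    (∀ F, IsFacetOf P F → G ⊆ F → ∃ i, F = Fs i) ∧
    u = ∑ i, us i

/-- The lattice length of the segment from `a` to `b`. -/
def LatticeLength {n : ℕ} (a b : Fin n → ℝ) (ℓ : ℕ) : Prop :=
  ∃ d : Fin n → ℤ, IsPrimitiveZ d ∧ ∀ i, b i - a i = (ℓ : ℝ) * (d i : ℝ)

/-- `d` is the primitive integer direction vector of the edge `E` at its
endpoint `v`, pointing away from `v`. -/
def EdgeDirAt {n : ℕ} (v : Fin n → ℝ) (E : Set (Fin n → ℝ)) (d : Fin n → ℤ) : Prop :=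
  IsPrimitiveZ d ∧ ∃ w ∈ E, ∃ t : ℝ, 0 < t ∧ ∀ i, w i - v i = t * (d i : ℝ)

/-- A polytope is smooth (Delzant) if every vertex lies in exactly `n` facets
and the primitive direction vectors of the `n` edges incident to each vertex
form a basis of the lattice `ℤ^n`. -/
def IsSmoothPolytope {n : ℕ} (P : Set (Fin n → ℝ)) : Prop :=
  ∀ v : Fin n → ℝ, IsVertexOf P v →
    (∃ Fs : Fin n → Set (Fin n → ℝ), Function.Injective Fs ∧
      (∀ i, IsFacetOf P (Fs i) ∧ v ∈ Fs i) ∧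
      (∀ F, IsFacetOf P F → v ∈ F → ∃ i, F = Fs i)) ∧
    (∃ (E : Fin n → Set (Fin n → ℝ)) (d : Fin n → Fin n → ℤ),
      Function.Injective E ∧
      (∀ i, IsEdgeOf P (E i) ∧ v ∈ E i ∧ EdgeDirAt v (E i) (d i)) ∧
      (∀ E', IsEdgeOf P E' → v ∈ E' → ∃ i, E' = E i) ∧
      IsUnit (Matrix.det (Matrix.of d)))

/-- A polytope is reflexive if the origin is in its interior and every facet is
supported at value `1` by its primitive outer normal. -/
def IsReflexivePolytope {n : ℕ} (P : Set (Fin n → ℝ)) : Prop :=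
  (0 : Fin n → ℝ) ∈ interior P ∧
  ∀ F u, IsFacetNormal P F u → ∀ x ∈ F, dotZ u x = 1

/-- A monotone polytope (= smooth reflexive polytope). -/
def IsMonotonePolytope {n : ℕ} (P : Set (Fin n → ℝ)) : Prop :=
  IsLatticePolytope P ∧ IsSmoothPolytope P ∧ IsReflexivePolytope P

/-- `F` is a nonempty face of `P` of codimension `k`. -/
def HasCodim {n : ℕ} (P F : Set (Fin n → ℝ)) (k : ℕ) : Prop :=
  IsFaceOf P F ∧ F.Nonempty ∧ dimSet F + k = n

/-- The monotone blow-up `P ∩ {x : u·x ≤ 1}` of a monotone polytope at a face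
with central normal `u`. -/
def blowupSet {n : ℕ} (P : Set (Fin n → ℝ)) (u : Fin n → ℤ) : Set (Fin n → ℝ) :=
  {x ∈ P | dotZ u x ≤ 1}

/-- The region removed from `P` by the monotone blow-up with central normal `u`. -/
def removedRegion {n : ℕ} (P : Set (Fin n → ℝ)) (u : Fin n → ℤ) : Set (Fin n → ℝ) :=
  {x ∈ P | 1 < dotZ u x}

/-- `P` admits a monotone blow-up at its face `F` with central normal `u`:
every vertex of `P` not in `F` satisfies `u·v ≤ 0`, and the blow-up is again a
monotone polytope. -/
def AdmitsMonotoneBlowup {n : ℕ} (P F : Set (Fin n → ℝ)) (u : Fin n → ℤ) : Prop :=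
  IsCentralNormal P F u ∧
  (∀ v, IsVertexOf P v → v ∉ F → dotZ u v ≤ 0) ∧
  IsMonotonePolytope (blowupSet P u)

/-- The monotone simplex `{x : x i ≥ -1 ∀ i, ∑ x i ≤ 1}` in `ℝ^n`. -/
def monotoneSimplex (n : ℕ) : Set (Fin n → ℝ) :=
  {x | (∀ i, -1 ≤ x i) ∧ ∑ i, x i ≤ 1}

/-- `AGL(n,ℤ)`-equivalence of subsets of `ℝ^n`: some map `x ↦ Ax + t` with
`A ∈ GL(n,ℤ)` and `t ∈ ℤ^n` maps `P` onto `Q`. -/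
def AGLEquiv {n : ℕ} (P Q : Set (Fin n → ℝ)) : Prop :=
  ∃ (A : Matrix (Fin n) (Fin n) ℤ) (t : Fin n → ℤ), IsUnit A.det ∧
    (fun x : Fin n → ℝ => fun i => (∑ j, (A i j : ℝ) * x j) + (t i : ℝ)) '' P = Q


/-!
Write `P = conv V`. At a vertex `q` of `F`, smoothness provides a lattice basis `d` of primitive
edge directions, and the tangent cone of `P` at `q` is the cone they span. Hence the normal of a
facet through `q` pairs to `-1` with exactly one `d k` and to `0` with the others, so the central
normal `u` pairs to `-1` with the edge directions leaving `F` and to `0` with those along `F`; in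
particular `u` exposes exactly `F`. Along an edge from `a ∈ F` to `c ∉ F` of lattice length `ℓ`
the value of `u` therefore drops by exactly `ℓ`, i.e. `u·c = b - ℓ`, which gives the forward
implication. Conversely, a vertex outside `F` with the largest value of `u` does not maximize `u`
on `P`, so, as in the simplex method, some edge at it increases `u`, and by maximality that edge
ends in `F`.
-/

open Matrix

variable {n : ℕ}

section ExposedFace

variable {P F E : Set (Fin n → ℝ)} {g : Fin n → ℝ} {v x y : Fin n → ℝ}

def exposedFace (P : Set (Fin n → ℝ)) (g : Fin n → ℝ) : Set (Fin n → ℝ) :=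
  {x ∈ P | ∀ y ∈ P, g ⬝ᵥ y ≤ g ⬝ᵥ x}

lemma isFaceOf_iff : IsFaceOf P F ↔ ∃ g, F = exposedFace P g := Iff.rfl

lemma IsFacetNormal.eq_exposedFace {u : Fin n → ℤ} (h : IsFacetNormal P F u) :
    F = exposedFace P (Int.cast ∘ u) :=
  h.2.2

lemma dotZ_eq_dotProduct (u : Fin n → ℤ) (x : Fin n → ℝ) : dotZ u x = (Int.cast ∘ u) ⬝ᵥ x := rfl

lemma intCast_dotProduct_intCast (u e : Fin n → ℤ) :
    (Int.cast ∘ u : Fin n → ℝ) ⬝ᵥ (Int.cast ∘ e) = ((u ⬝ᵥ e : ℤ) : ℝ) :=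
  (RingHom.map_dotProduct (Int.castRingHom ℝ) u e).symm

lemma exposedFace_subset : exposedFace P g ⊆ P := fun _ hx => hx.1

lemma dotProduct_eq_of_mem_exposedFace (hx : x ∈ exposedFace P g) (hy : y ∈ exposedFace P g) :
    g ⬝ᵥ x = g ⬝ᵥ y :=
  le_antisymm (hy.2 x hx.1) (hx.2 y hy.1)

lemma mem_exposedFace_of_dotProduct_eq (hx : x ∈ exposedFace P g) (hy : y ∈ P)
    (h : g ⬝ᵥ y = g ⬝ᵥ x) : y ∈ exposedFace P g :=
  ⟨hy, fun z hz => h ▸ hx.2 z hz⟩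

lemma dotProduct_lt_of_notMem_exposedFace (hx : x ∈ exposedFace P g) (hy : y ∈ P)
    (hyg : y ∉ exposedFace P g) : g ⬝ᵥ y < g ⬝ᵥ x :=
  lt_of_le_of_ne (hx.2 y hy) fun h => hyg (mem_exposedFace_of_dotProduct_eq hx hy h)

lemma convex_exposedFace (hP : Convex ℝ P) (g : Fin n → ℝ) : Convex ℝ (exposedFace P g) := by
  intro x hx y hy s t hs ht hst
  refine ⟨hP hx.1 hy.1 hs ht hst, fun z hz => ?_⟩
  rw [dotProduct_add, dotProduct_smul, dotProduct_smul, smul_eq_mul, smul_eq_mul]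
  have h1 := mul_le_mul_of_nonneg_left (hx.2 z hz) hs
  have h2 := mul_le_mul_of_nonneg_left (hy.2 z hz) ht
  have h3 : (s + t) * g ⬝ᵥ z = g ⬝ᵥ z := by rw [hst, one_mul]
  linarith

lemma vectorSpan_exposedFace_le_ker (P : Set (Fin n → ℝ)) (g : Fin n → ℝ) :
    vectorSpan ℝ (exposedFace P g) ≤ LinearMap.ker (dotProductBilin ℝ ℝ g) := by
  rw [vectorSpan_def, Submodule.span_le]
  rintro _ ⟨x, hx, y, hy, rfl⟩
  simp [dotProduct_sub, dotProduct_eq_of_mem_exposedFace hx hy]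

lemma isVertexOf_iff : IsVertexOf P v ↔ ∃ w, {v} = exposedFace P w := Iff.rfl

lemma IsVertexOf.mem (hv : IsVertexOf P v) : v ∈ P := by
  obtain ⟨w, hw⟩ := isVertexOf_iff.1 hv
  exact exposedFace_subset (hw ▸ rfl : v ∈ exposedFace P w)

lemma IsEdgeOf.subset (hE : IsEdgeOf P E) : E ⊆ P := by
  obtain ⟨⟨w, rfl⟩, -⟩ := hE
  exact exposedFace_subset

end ExposedFace

section Segment

variable {a c p : Fin n → ℝ}

lemma dotProduct_self_nonneg (x : Fin n → ℝ) : 0 ≤ x ⬝ᵥ x :=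
  Finset.sum_nonneg fun i _ => mul_self_nonneg (x i)

lemma dotProduct_self_pos {x : Fin n → ℝ} (hx : x ≠ 0) : 0 < x ⬝ᵥ x :=
  lt_of_le_of_ne (dotProduct_self_nonneg x) (Ne.symm (dotProduct_self_eq_zero.not.2 hx))

lemma sub_dotProduct_of_mem_segment (hp : p ∈ segment ℝ a c) :
    ∃ t : ℝ, 0 ≤ t ∧ p = a + t • (c - a) ∧
      (a - c) ⬝ᵥ p = (a - c) ⬝ᵥ a - t * ((a - c) ⬝ᵥ (a - c)) := by
  rw [segment_eq_image'] at hp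
  obtain ⟨t, ⟨ht, -⟩, rfl⟩ := hp
  refine ⟨t, ht, rfl, ?_⟩
  rw [← neg_sub a c, dotProduct_add, dotProduct_smul, dotProduct_neg, smul_eq_mul]
  ring

lemma sub_dotProduct_le_of_mem_segment (hp : p ∈ segment ℝ a c) :
    (a - c) ⬝ᵥ p ≤ (a - c) ⬝ᵥ a := by
  obtain ⟨t, ht, -, h⟩ := sub_dotProduct_of_mem_segment hp
  rw [h]
  linarith [mul_nonneg ht (dotProduct_self_nonneg (a - c))]

lemma eq_of_mem_segment_of_sub_dotProduct_le (hp : p ∈ segment ℝ a c)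
    (h : (a - c) ⬝ᵥ a ≤ (a - c) ⬝ᵥ p) : p = a := by
  obtain ⟨t, ht, rfl, hval⟩ := sub_dotProduct_of_mem_segment hp
  rcases eq_or_ne a c with rfl | hac
  · simp
  have hpos := dotProduct_self_pos (sub_ne_zero.2 hac)
  obtain rfl : t = 0 := by nlinarith
  simp

lemma exists_dotProduct_eq_zero_pos {a b : Fin n → ℝ} (hb : ∀ t : ℝ, b ≠ t • a) :
    ∃ χ : Fin n → ℝ, χ ⬝ᵥ a = 0 ∧ 0 < χ ⬝ᵥ b := by
  rcases eq_or_ne a 0 with rfl | ha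
  · exact ⟨b, dotProduct_zero b, dotProduct_self_pos (by simpa using hb 0)⟩
  set χ := b - (a ⬝ᵥ b / a ⬝ᵥ a) • a
  have hχa : χ ⬝ᵥ a = 0 := by
    rw [sub_dotProduct, smul_dotProduct, smul_eq_mul, dotProduct_comm b a,
      div_mul_cancel₀ _ (dotProduct_self_pos ha).ne', sub_self]
  refine ⟨χ, hχa, ?_⟩
  have hχχ : χ ⬝ᵥ χ = χ ⬝ᵥ b := by
    rw [dotProduct_sub χ, dotProduct_smul, hχa, smul_zero, sub_zero]
  exact hχχ ▸ dotProduct_self_pos fun h0 => hb _ (sub_eq_zero.1 h0)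

end Segment

section Polytope

variable {V : Finset (Fin n → ℝ)} {g : Fin n → ℝ} {v a c x p : Fin n → ℝ}

lemma exists_mem_dotProduct_le (g : Fin n → ℝ) (hx : x ∈ convexHull ℝ (V : Set (Fin n → ℝ))) :
    ∃ p ∈ V, g ⬝ᵥ x ≤ g ⬝ᵥ p :=
  ((dotProductBilin ℝ ℝ g).convexOn convex_univ).exists_ge_of_mem_convexHull
    (Set.subset_univ _) hx

open scoped Classical in
noncomputable def maxSet (V : Finset (Fin n → ℝ)) (g : Fin n → ℝ) : Finset (Fin n → ℝ) :=
  V.filter fun p => ∀ q ∈ V, g ⬝ᵥ q ≤ g ⬝ᵥ p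

lemma mem_maxSet : p ∈ maxSet V g ↔ p ∈ V ∧ ∀ q ∈ V, g ⬝ᵥ q ≤ g ⬝ᵥ p :=
  Finset.mem_filter

lemma maxSet_subset (V : Finset (Fin n → ℝ)) (g : Fin n → ℝ) : maxSet V g ⊆ V :=
  fun _ hp => (mem_maxSet.1 hp).1

lemma maxSet_nonempty (hV : V.Nonempty) (g : Fin n → ℝ) : (maxSet V g).Nonempty := by
  obtain ⟨p, hp, hmax⟩ := V.exists_max_image (g ⬝ᵥ ·) hV
  exact ⟨p, mem_maxSet.2 ⟨hp, hmax⟩⟩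

lemma dotProduct_eq_of_mem_maxSet {q : Fin n → ℝ} (hp : p ∈ maxSet V g) (hq : q ∈ maxSet V g) :
    g ⬝ᵥ p = g ⬝ᵥ q :=
  le_antisymm ((mem_maxSet.1 hq).2 p (mem_maxSet.1 hp).1)
    ((mem_maxSet.1 hp).2 q (mem_maxSet.1 hq).1)

lemma maxSet_subset_exposedFace :
    (maxSet V g : Set (Fin n → ℝ)) ⊆ exposedFace (convexHull ℝ ↑V) g := by
  intro p hp
  obtain ⟨hpV, hmax⟩ := mem_maxSet.1 hp
  refine ⟨subset_convexHull ℝ _ hpV, fun y hy => ?_⟩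
  obtain ⟨q, hq, hyq⟩ := exists_mem_dotProduct_le g hy
  exact hyq.trans (hmax q hq)

lemma exposedFace_convexHull (V : Finset (Fin n → ℝ)) (g : Fin n → ℝ) :
    exposedFace (convexHull ℝ (V : Set (Fin n → ℝ))) g = convexHull ℝ ↑(maxSet V g) := by
  classical
  refine subset_antisymm (fun x hx => ?_)
    (convexHull_min maxSet_subset_exposedFace (convex_exposedFace (convex_convexHull ℝ _) g))
  obtain ⟨w, hw₀, hw₁, rfl⟩ := Finset.mem_convexHull.1 hx.1
  have hle : ∀ q ∈ V, g ⬝ᵥ q ≤ g ⬝ᵥ V.centerMass w id := fun q hq =>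
    hx.2 q (subset_convexHull ℝ _ hq)
  -- the weighted average of the gaps to the maximum vanishes, so weighted points are maximizers
  have hgap : ∑ q ∈ V, w q * (g ⬝ᵥ V.centerMass w id - g ⬝ᵥ q) = 0 := by
    simp only [mul_sub, Finset.sum_sub_distrib, ← Finset.sum_mul, hw₁, one_mul]
    rw [Finset.centerMass_eq_of_sum_1 _ _ hw₁, dotProduct_sum]
    simp [dotProduct_smul]
  have hsupp : ∀ q ∈ V, w q ≠ 0 → q ∈ maxSet V g := by
    intro q hq hwq
    have h0 := (Finset.sum_eq_zero_iff_of_nonneg fun r hr =>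
      mul_nonneg (hw₀ r hr) (sub_nonneg.2 (hle r hr))).1 hgap q hq
    have hgq : g ⬝ᵥ q = g ⬝ᵥ V.centerMass w id := by
      linarith [(mul_eq_zero.1 h0).resolve_left hwq]
    exact mem_maxSet.2 ⟨hq, fun r hr => hgq ▸ hle r hr⟩
  rw [← Finset.centerMass_filter_ne_zero]
  refine Finset.centerMass_mem_convexHull _ (fun q hq => hw₀ q (Finset.mem_filter.1 hq).1) ?_
    fun q hq => hsupp q (Finset.mem_filter.1 hq).1 (Finset.mem_filter.1 hq).2
  rw [Finset.sum_filter_ne_zero, hw₁]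
  exact one_pos

/-- A face of a face is a face: tilting `g` slightly towards `f` exposes the `f`-face of the
`g`-face. -/
lemma exists_maxSet_add_smul_eq (g f : Fin n → ℝ) :
    ∃ δ : ℝ, 0 < δ ∧ maxSet V (g + δ • f) = maxSet (maxSet V g) f := by
  set S := maxSet V g
  have hev : ∀ᶠ δ in nhds (0 : ℝ), ∀ q ∈ V \ S, ∀ p ∈ S,
      (g + δ • f) ⬝ᵥ q < (g + δ • f) ⬝ᵥ p := by
    refine (Finset.eventually_all _).2 fun q hq => (Finset.eventually_all _).2 fun p hp => ?_
    obtain ⟨hqV, hqS⟩ := Finset.mem_sdiff.1 hq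
    have hlt : g ⬝ᵥ q < g ⬝ᵥ p := lt_of_le_of_ne ((mem_maxSet.1 hp).2 q hqV) fun h =>
      hqS (mem_maxSet.2 ⟨hqV, fun r hr => h ▸ (mem_maxSet.1 hp).2 r hr⟩)
    simp only [add_dotProduct, smul_dotProduct, smul_eq_mul]
    exact ContinuousAt.eventually_lt (by fun_prop) (by fun_prop) (by simpa using hlt)
  obtain ⟨δ, hδ, hsep⟩ := hev.exists_gt
  have hcmp : ∀ p ∈ S, ∀ q ∈ S,
      ((g + δ • f) ⬝ᵥ q ≤ (g + δ • f) ⬝ᵥ p ↔ f ⬝ᵥ q ≤ f ⬝ᵥ p) := by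
    intro p hp q hq
    simp only [add_dotProduct, smul_dotProduct, smul_eq_mul, dotProduct_eq_of_mem_maxSet hp hq,
      add_le_add_iff_left, mul_le_mul_iff_right₀ hδ]
  refine ⟨δ, hδ, Finset.ext fun p => ?_⟩
  rw [mem_maxSet, mem_maxSet]
  constructor
  · rintro ⟨hpV, hmax⟩
    have hpS : p ∈ S := by
      by_contra hpS
      obtain ⟨p', hp'⟩ := maxSet_nonempty ⟨p, hpV⟩ g
      exact (hsep p (Finset.mem_sdiff.2 ⟨hpV, hpS⟩) p' hp').not_ge
        (hmax p' (maxSet_subset _ _ hp'))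
    exact ⟨hpS, fun q hq => (hcmp p hpS q hq).1 (hmax q (maxSet_subset _ _ hq))⟩
  · rintro ⟨hpS, hmax⟩
    refine ⟨maxSet_subset _ _ hpS, fun q hq => ?_⟩
    by_cases hqS : q ∈ S
    · exact (hcmp p hpS q hqS).2 (hmax q hqS)
    · exact (hsep q (Finset.mem_sdiff.2 ⟨hq, hqS⟩) p hpS).le

lemma isVertexOf_convexHull_iff :
    IsVertexOf (convexHull ℝ (V : Set (Fin n → ℝ))) v ↔ ∃ g, maxSet V g = {v} := by
  simp only [isVertexOf_iff, exposedFace_convexHull]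
  constructor
  · rintro ⟨g, hg⟩
    have hsub : (maxSet V g : Set (Fin n → ℝ)) ⊆ {v} := hg ▸ subset_convexHull ℝ _
    obtain ⟨p, hp⟩ : (maxSet V g).Nonempty := by
      rw [Finset.nonempty_iff_ne_empty]
      rintro hempty
      simp [hempty] at hg
    obtain rfl : p = v := hsub hp
    exact ⟨g, Finset.eq_singleton_iff_unique_mem.2 ⟨hp, fun q hq => hsub hq⟩⟩
  · rintro ⟨g, hg⟩
    exact ⟨g, by rw [hg, Finset.coe_singleton, convexHull_singleton]⟩

lemma IsVertexOf.mem_finset (hv : IsVertexOf (convexHull ℝ (V : Set (Fin n → ℝ))) v) : v ∈ V := by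
  obtain ⟨g, hg⟩ := isVertexOf_convexHull_iff.1 hv
  exact maxSet_subset V g (hg ▸ Finset.mem_singleton_self v)

lemma IsVertexOf.exists_dotProduct_lt (hv : IsVertexOf (convexHull ℝ (V : Set (Fin n → ℝ))) v) :
    ∃ w, ∀ q ∈ V, q ≠ v → w ⬝ᵥ q < w ⬝ᵥ v := by
  obtain ⟨w, hw⟩ := isVertexOf_convexHull_iff.1 hv
  have hvw : v ∈ maxSet V w := hw ▸ Finset.mem_singleton_self v
  refine ⟨w, fun q hq hqv => lt_of_not_ge fun h => hqv ?_⟩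
  have hqw : q ∈ maxSet V w := mem_maxSet.2 ⟨hq, fun r hr => ((mem_maxSet.1 hvw).2 r hr).trans h⟩
  rw [hw] at hqw
  exact Finset.mem_singleton.1 hqw

lemma exists_isVertexOf_mem_maxSet (hV : V.Nonempty) (g : Fin n → ℝ) :
    ∃ v ∈ maxSet V g, IsVertexOf (convexHull ℝ (V : Set (Fin n → ℝ))) v := by
  induction hk : (maxSet V g).card using Nat.strong_induction_on generalizing g with
  | _ k ih =>
  obtain ⟨q, hq⟩ := maxSet_nonempty hV g
  rcases Finset.eq_singleton_or_nontrivial hq with hsingle | hnontriv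
  · exact ⟨q, hq, isVertexOf_convexHull_iff.2 ⟨g, hsingle⟩⟩
  obtain ⟨q', hq', hne⟩ := hnontriv.exists_ne q
  obtain ⟨δ, -, hδ⟩ := exists_maxSet_add_smul_eq (V := V) g (q' - q)
  have hq : q ∉ maxSet (maxSet V g) (q' - q) := fun h =>
    hne (eq_of_mem_segment_of_sub_dotProduct_le (right_mem_segment ℝ q' q)
      ((mem_maxSet.1 h).2 q' hq')).symm
  have hlt : (maxSet V (g + δ • (q' - q))).card < k := by
    rw [hδ, ← hk]
    exact Finset.card_lt_card ⟨maxSet_subset _ _, fun hsub => hq (hsub ‹_›)⟩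
  obtain ⟨v, hv, hvert⟩ := ih _ hlt _ rfl
  exact ⟨v, maxSet_subset _ _ (hδ ▸ hv), hvert⟩

lemma IsEdgeOf.isVertexOf_left
    (hE : IsEdgeOf (convexHull ℝ (V : Set (Fin n → ℝ))) (segment ℝ a c)) :
    IsVertexOf (convexHull ℝ (V : Set (Fin n → ℝ))) a := by
  obtain ⟨g, hg⟩ := isFaceOf_iff.1 hE.1
  rw [exposedFace_convexHull] at hg
  set S := maxSet V g
  have hSseg : ∀ p ∈ S, p ∈ segment ℝ a c := fun p hp => hg ▸ subset_convexHull ℝ _ hp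
  have haS : a ∈ S := by
    obtain ⟨p, hp, hap⟩ := exists_mem_dotProduct_le (a - c)
      (hg ▸ left_mem_segment ℝ a c : a ∈ convexHull ℝ (S : Set (Fin n → ℝ)))
    rwa [eq_of_mem_segment_of_sub_dotProduct_le (hSseg p hp) hap] at hp
  have hmax : maxSet S (a - c) = {a} := Finset.eq_singleton_iff_unique_mem.2
    ⟨mem_maxSet.2 ⟨haS, fun q hq => sub_dotProduct_le_of_mem_segment (hSseg q hq)⟩,
      fun p hp => eq_of_mem_segment_of_sub_dotProduct_le (hSseg p (mem_maxSet.1 hp).1)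
        ((mem_maxSet.1 hp).2 a haS)⟩
  obtain ⟨δ, -, hδ⟩ := exists_maxSet_add_smul_eq (V := V) g (a - c)
  exact isVertexOf_convexHull_iff.2 ⟨_, hδ.trans hmax⟩

lemma exists_pivot (S : Finset (Fin n → ℝ)) (w χ : Fin n → ℝ) (hvS : v ∈ S)
    (hw : ∀ q ∈ S, q ≠ v → w ⬝ᵥ q < w ⬝ᵥ v) (hχ : ∃ q ∈ S, χ ⬝ᵥ v < χ ⬝ᵥ q) :
    ∃ h, v ∈ maxSet S h ∧ (∃ q ∈ maxSet S h, q ≠ v) ∧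
      ∀ q ∈ maxSet S h, q ≠ v → χ ⬝ᵥ v < χ ⬝ᵥ q := by
  classical
  set B := S.filter fun q => χ ⬝ᵥ v < χ ⬝ᵥ q
  have hχB : ∀ q ∈ B, 0 < χ ⬝ᵥ q - χ ⬝ᵥ v := fun q hq => sub_pos.2 (Finset.mem_filter.1 hq).2
  -- tilt `w` towards `χ` by the least amount making it maximal at a second point
  obtain ⟨q₀, hq₀B, hq₀⟩ := B.exists_min_image
    (fun q => (w ⬝ᵥ v - w ⬝ᵥ q) / (χ ⬝ᵥ q - χ ⬝ᵥ v))
    (let ⟨q, hq, hlt⟩ := hχ; ⟨q, Finset.mem_filter.2 ⟨hq, hlt⟩⟩)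
  have hq₀S : q₀ ∈ S := (Finset.mem_filter.1 hq₀B).1
  have hq₀v : q₀ ≠ v := fun h0 => (hχB q₀ hq₀B).ne' (by rw [h0, sub_self])
  set s := (w ⬝ᵥ v - w ⬝ᵥ q₀) / (χ ⬝ᵥ q₀ - χ ⬝ᵥ v)
  have hs : 0 ≤ s := div_nonneg (sub_nonneg.2 (hw q₀ hq₀S hq₀v).le) (hχB q₀ hq₀B).le
  set h := w + s • χ
  have hval : ∀ q, h ⬝ᵥ q = w ⬝ᵥ q + s * χ ⬝ᵥ q := fun q => by
    simp only [h, add_dotProduct, smul_dotProduct, smul_eq_mul]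
  have hlt : ∀ q ∈ S, q ≠ v → q ∉ B → h ⬝ᵥ q < h ⬝ᵥ v := fun q hq hqv hqB => by
    have hχq : χ ⬝ᵥ q ≤ χ ⬝ᵥ v := not_lt.1 fun h' => hqB (Finset.mem_filter.2 ⟨hq, h'⟩)
    rw [hval, hval]
    nlinarith [hw q hq hqv, mul_le_mul_of_nonneg_left hχq hs]
  have hvmax : v ∈ maxSet S h := mem_maxSet.2 ⟨hvS, fun q hq => by
    by_cases hqv : q = v
    · rw [hqv]
    by_cases hqB : q ∈ B
    · have := (le_div_iff₀ (hχB q hqB)).1 (hq₀ q hqB)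
      rw [hval, hval]
      linarith
    · exact (hlt q hq hqv hqB).le⟩
  have hq₀max : h ⬝ᵥ q₀ = h ⬝ᵥ v := by
    have : s * (χ ⬝ᵥ q₀ - χ ⬝ᵥ v) = w ⬝ᵥ v - w ⬝ᵥ q₀ := div_mul_cancel₀ _ (hχB q₀ hq₀B).ne'
    rw [hval, hval]
    linarith
  refine ⟨h, hvmax, ⟨q₀, mem_maxSet.2 ⟨hq₀S, hq₀max ▸ (mem_maxSet.1 hvmax).2⟩, hq₀v⟩,
    fun q hq hqv => ?_⟩
  by_contra hqχ
  exact (hlt q (mem_maxSet.1 hq).1 hqv fun hqB => hqχ (Finset.mem_filter.1 hqB).2).not_ge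
    ((mem_maxSet.1 hq).2 v hvS)

lemma convexHull_eq_segment_of_forall_sub_eq_smul {S : Finset (Fin n → ℝ)} {w q₀ : Fin n → ℝ}
    (hvS : v ∈ S) (hq₀S : q₀ ∈ S) (hq₀v : q₀ ≠ v) (hw : ∀ q ∈ S, q ≠ v → w ⬝ᵥ q < w ⬝ᵥ v)
    (hq₀min : ∀ q ∈ S, q ≠ v → w ⬝ᵥ q₀ ≤ w ⬝ᵥ q) (hcol : ∀ q ∈ S, ∃ t : ℝ, q - v = t • (q₀ - v)) :
    convexHull ℝ (S : Set (Fin n → ℝ)) = segment ℝ v q₀ := by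
  refine subset_antisymm (convexHull_min (fun q hq => ?_) (convex_segment v q₀))
    ((convex_convexHull ℝ _).segment_subset (subset_convexHull ℝ _ hvS)
      (subset_convexHull ℝ _ hq₀S))
  obtain ⟨t, ht⟩ := hcol q hq
  have he : w ⬝ᵥ q - w ⬝ᵥ v = t * (w ⬝ᵥ q₀ - w ⬝ᵥ v) := by
    rw [← dotProduct_sub, ht, dotProduct_smul, dotProduct_sub, smul_eq_mul]
  have h0 : w ⬝ᵥ q₀ - w ⬝ᵥ v < 0 := sub_neg.2 (hw q₀ hq₀S hq₀v)
  have hbounds : w ⬝ᵥ q₀ ≤ w ⬝ᵥ q ∧ w ⬝ᵥ q ≤ w ⬝ᵥ v := by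
    rcases eq_or_ne q v with rfl | hqv
    · exact ⟨(hw q₀ hq₀S hq₀v).le, le_rfl⟩
    · exact ⟨hq₀min q hq hqv, (hw q hq hqv).le⟩
  rw [segment_eq_image']
  refine ⟨t, ⟨by nlinarith, by nlinarith⟩, ?_⟩
  change v + t • (q₀ - v) = q
  rw [← ht]
  abel

lemma exists_isEdgeOf_segment_of_mem_maxSet
    (hv : IsVertexOf (convexHull ℝ (V : Set (Fin n → ℝ))) v) (h : Fin n → ℝ)
    (hvS : v ∈ maxSet V h) (hS : ∃ q ∈ maxSet V h, q ≠ v) :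
    ∃ c ∈ maxSet V h, c ≠ v ∧ IsEdgeOf (convexHull ℝ (V : Set (Fin n → ℝ))) (segment ℝ v c) := by
  obtain ⟨w, hw⟩ := hv.exists_dotProduct_lt
  induction hk : (maxSet V h).card using Nat.strong_induction_on generalizing h with
  | _ k ih =>
  set S := maxSet V h
  have hwS : ∀ q ∈ S, q ≠ v → w ⬝ᵥ q < w ⬝ᵥ v := fun q hq => hw q (maxSet_subset V h hq)
  obtain ⟨q₀, hq₀, hq₀min⟩ := (S.erase v).exists_min_image (w ⬝ᵥ ·)
    (let ⟨q, hq, hqv⟩ := hS; ⟨q, Finset.mem_erase.2 ⟨hqv, hq⟩⟩)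
  obtain ⟨hq₀v, hq₀S⟩ := Finset.mem_erase.1 hq₀
  by_cases hcol : ∀ q ∈ S, ∃ t : ℝ, q - v = t • (q₀ - v)
  · refine ⟨q₀, hq₀S, hq₀v, ⟨⟨h, ?_⟩, v, q₀, hq₀v.symm, rfl⟩⟩
    change segment ℝ v q₀ = exposedFace _ h
    rw [exposedFace_convexHull, convexHull_eq_segment_of_forall_sub_eq_smul hvS hq₀S hq₀v hwS
      (fun q hq hqv => hq₀min q (Finset.mem_erase.2 ⟨hqv, hq⟩)) hcol]
  -- otherwise pivot towards a direction separating a non-collinear point from `q₀`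
  simp only [not_forall, not_exists] at hcol
  obtain ⟨q₁, hq₁, hq₁t⟩ := hcol
  obtain ⟨χ, hχa, hχ⟩ := exists_dotProduct_eq_zero_pos hq₁t
  obtain ⟨h', hvS', hS', hbetter⟩ := exists_pivot S w χ hvS hwS
    ⟨q₁, hq₁, by rw [dotProduct_sub] at hχ; linarith⟩
  have hq₀' : q₀ ∉ maxSet S h' := fun hq₀' => by
    have := hbetter q₀ hq₀' hq₀v
    rw [dotProduct_sub, sub_eq_zero] at hχa
    exact this.ne hχa.symm
  obtain ⟨δ, -, hδ⟩ := exists_maxSet_add_smul_eq (V := V) h h'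
  have hlt : (maxSet V (h + δ • h')).card < k := by
    rw [hδ, ← hk]
    exact Finset.card_lt_card ⟨maxSet_subset _ _, fun hsub => hq₀' (hsub hq₀S)⟩
  obtain ⟨c, hc, hcv, hE⟩ := ih _ hlt (h + δ • h') (hδ ▸ hvS') (hδ ▸ hS') rfl
  exact ⟨c, maxSet_subset S h' (hδ ▸ hc), hcv, hE⟩

theorem exists_isEdgeOf_dotProduct_lt (hv : IsVertexOf (convexHull ℝ (V : Set (Fin n → ℝ))) v)
    (hx : x ∈ convexHull ℝ (V : Set (Fin n → ℝ))) (hgx : g ⬝ᵥ v < g ⬝ᵥ x) :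
    ∃ c, IsVertexOf (convexHull ℝ (V : Set (Fin n → ℝ))) c ∧
      IsEdgeOf (convexHull ℝ (V : Set (Fin n → ℝ))) (segment ℝ v c) ∧ g ⬝ᵥ v < g ⬝ᵥ c := by
  obtain ⟨w, hw⟩ := hv.exists_dotProduct_lt
  obtain ⟨p, hp, hxp⟩ := exists_mem_dotProduct_le g hx
  obtain ⟨h, hvS, hS, hbetter⟩ := exists_pivot V w g hv.mem_finset hw ⟨p, hp, hgx.trans_le hxp⟩
  obtain ⟨c, hc, hcv, hE⟩ := exists_isEdgeOf_segment_of_mem_maxSet hv h hvS hS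
  exact ⟨c, IsEdgeOf.isVertexOf_left (segment_symm ℝ v c ▸ hE), hE, hbetter c hc hcv⟩

theorem exists_isEdgeOf_segment_of_forall_dotProduct_le
    (hv : IsVertexOf (convexHull ℝ (V : Set (Fin n → ℝ))) v)
    (hvF : v ∉ exposedFace (convexHull ℝ ↑V) g) (hF : (exposedFace (convexHull ℝ ↑V) g).Nonempty)
    (hmax : ∀ c, IsVertexOf (convexHull ℝ (V : Set (Fin n → ℝ))) c →
      c ∉ exposedFace (convexHull ℝ ↑V) g → g ⬝ᵥ c ≤ g ⬝ᵥ v) :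
    ∃ c ∈ exposedFace (convexHull ℝ ↑V) g, IsVertexOf (convexHull ℝ (V : Set (Fin n → ℝ))) c ∧
      IsEdgeOf (convexHull ℝ (V : Set (Fin n → ℝ))) (segment ℝ c v) := by
  obtain ⟨x, hx⟩ := hF
  obtain ⟨c, hc, hE, hlt⟩ := exists_isEdgeOf_dotProduct_lt hv hx.1
    (dotProduct_lt_of_notMem_exposedFace hx hv.mem hvF)
  exact ⟨c, by_contra fun hcF => (hmax c hc hcF).not_gt hlt, hc, segment_symm ℝ v c ▸ hE⟩

end Polytope

section LatticeVectors

variable {e f : Fin n → ℤ} {a c : Fin n → ℝ}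

lemma IsPrimitiveZ.ne_zero (he : IsPrimitiveZ e) : e ≠ 0 := by
  rintro rfl
  have h0 : Finset.univ.gcd (0 : Fin n → ℤ) = 0 := Finset.gcd_eq_zero_iff.2 fun _ _ => rfl
  exact zero_ne_one (h0.symm.trans he)

lemma intCast_comp_ne_zero (he : e ≠ 0) : (Int.cast ∘ e : Fin n → ℝ) ≠ 0 := fun h =>
  he (funext fun i => by simpa using congrFun h i)

lemma IsPrimitiveZ.eq_of_smul_eq_smul (he : IsPrimitiveZ e) (hf : IsPrimitiveZ f) {α β : ℝ}
    (hα : 0 < α) (hβ : 0 < β) (h : α • (Int.cast ∘ e : Fin n → ℝ) = β • (Int.cast ∘ f)) :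
    e = f := by
  have hef : ∀ i, (e i : ℝ) = β / α * f i := fun i => by
    have := congrFun h i
    simp only [Pi.smul_apply, Function.comp_apply, smul_eq_mul] at this
    field_simp
    linarith
  -- Bézout for the primitive vector `f` shows that the ratio `β / α` is an integer
  obtain ⟨y, hy⟩ := Finset.gcd_eq_sum_mul Finset.univ f
  rw [show Finset.univ.gcd f = 1 from hf] at hy
  set m := ∑ i, e i * y i
  have hm : (m : ℝ) = β / α := by
    have hy' : (1 : ℝ) = ∑ i, (f i : ℝ) * y i := by exact_mod_cast hy
    simp only [m, Int.cast_sum, Int.cast_mul, hef, mul_assoc, ← Finset.mul_sum, ← hy', mul_one]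
  have hem : e = m • f := funext fun i => by
    have : (e i : ℝ) = ((m * f i : ℤ) : ℝ) := by rw [Int.cast_mul, hm, hef]
    exact_mod_cast this
  have hunit : IsUnit m := by
    have hgcd : Finset.univ.gcd (fun i => m * f i) = 1 := by
      rw [← show Finset.univ.gcd e = 1 from he, hem]
      rfl
    rwa [Finset.gcd_mul_left, show Finset.univ.gcd f = 1 from hf, mul_one, normalize_eq_one] at hgcd
  have hm1 : m = 1 := (Int.isUnit_iff.1 hunit).resolve_right fun h1 => by
    have : (m : ℝ) < 0 := by rw [h1]; norm_num
    exact absurd (hm ▸ this) (div_pos hβ hα).not_gt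
  rw [hem, hm1, one_smul]

lemma exists_latticeLength (ha : IsLatticePt a) (hc : IsLatticePt c) (hac : a ≠ c) :
    ∃ ℓ, LatticeLength a c ℓ := by
  choose ma hma using ha
  choose mc hmc using hc
  set e := mc - ma
  have he : ∀ i, c i - a i = e i := fun i => by simp [e, hma, hmc]
  obtain ⟨i, hi⟩ : ∃ i, e i ≠ 0 := by
    by_contra! h
    exact hac (funext fun i => by linarith [he i, h i ▸ Int.cast_zero (R := ℝ)])
  have hg : 0 ≤ Finset.univ.gcd e := Int.nonneg_of_normalize_eq_self Finset.normalize_gcd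
  refine ⟨(Finset.univ.gcd e).toNat, fun i => e i / Finset.univ.gcd e,
    Finset.gcd_div_eq_one (Finset.mem_univ i) hi, fun i => ?_⟩
  rw [he, show (((Finset.univ.gcd e).toNat : ℕ) : ℝ) = (Finset.univ.gcd e : ℤ) by
    exact_mod_cast Int.toNat_of_nonneg hg]
  exact_mod_cast (Int.mul_ediv_cancel' (Finset.gcd_dvd (Finset.mem_univ i))).symm

end LatticeVectors

section EdgeBasis

variable {d : Fin n → Fin n → ℤ}

/-- The basis dual to the rows `d k`: the columns of the inverse matrix. -/
noncomputable def dualVec (d : Fin n → Fin n → ℤ) (k : Fin n) : Fin n → ℝ :=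
  fun j => ((of d).map (Int.cast : ℤ → ℝ))⁻¹ j k

lemma isUnit_det_map_intCast (hd : IsUnit (of d).det) :
    IsUnit ((of d).map (Int.cast : ℤ → ℝ)).det := by
  have := hd.map (Int.castRingHom ℝ)
  rwa [RingHom.map_det] at this

lemma intCast_mulVec_apply (e : Fin n → ℤ) (j : Fin n) :
    ((of d *ᵥ e) j : ℝ) = (Int.cast ∘ e : Fin n → ℝ) ⬝ᵥ (Int.cast ∘ d j) := by
  rw [intCast_dotProduct_intCast, dotProduct_comm]
  rfl

lemma dualVec_dotProduct (hd : IsUnit (of d).det) (k j : Fin n) :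
    dualVec d k ⬝ᵥ (Int.cast ∘ d j) = if j = k then 1 else 0 := by
  have h := congrFun (congrFun (mul_nonsing_inv _ (isUnit_det_map_intCast hd)) j) k
  rw [mul_apply, one_apply] at h
  rw [← h, dotProduct]
  exact Finset.sum_congr rfl fun l _ => mul_comm _ _

lemma sum_dualVec_smul (hd : IsUnit (of d).det) (z : Fin n → ℝ) :
    ∑ k, (dualVec d k ⬝ᵥ z) • (Int.cast ∘ d k : Fin n → ℝ) = z := by
  have h : z ᵥ* ((of d).map (Int.cast : ℤ → ℝ))⁻¹ ᵥ* (of d).map (Int.cast : ℤ → ℝ) = z := by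
    rw [vecMul_vecMul, nonsing_inv_mul _ (isUnit_det_map_intCast hd), vecMul_one]
  rw [vecMul_eq_sum] at h
  convert h using 3 with k
  · exact dotProduct_comm _ _
  · rfl

lemma dotProduct_eq_sum_dualVec (hd : IsUnit (of d).det) (g z : Fin n → ℝ) :
    g ⬝ᵥ z = ∑ k, (dualVec d k ⬝ᵥ z) * g ⬝ᵥ (Int.cast ∘ d k) := by
  conv_lhs => rw [← sum_dualVec_smul hd z]
  simp [dotProduct_sum, dotProduct_smul]

lemma linearIndependent_intCast_comp (hd : IsUnit (of d).det) :
    LinearIndependent ℝ fun k => (Int.cast ∘ d k : Fin n → ℝ) :=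
  linearIndependent_rows_of_isUnit
    (((of d).map _).isUnit_iff_isUnit_det.2 (isUnit_det_map_intCast hd))

lemma mulVec_eq_neg_single_of_isPrimitiveZ {vn : Fin n → ℤ} (hd : IsUnit (of d).det)
    (hvn : IsPrimitiveZ vn) {k : Fin n} (hzero : ∀ j, j ≠ k → (of d *ᵥ vn) j = 0)
    (hk : (of d *ᵥ vn) k ≤ 0) : of d *ᵥ vn = -Pi.single k 1 := by
  classical
  set c := of d *ᵥ vn
  have hc : c = c k • Pi.single k 1 := funext fun j => by
    by_cases hjk : j = k
    · subst hjk
      simp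
    · simp [hzero j hjk, hjk]
  have hdvd : c k ∣ Finset.univ.gcd vn := Finset.dvd_gcd fun i _ => by
    have hvn_eq : vn = c k • ((of d)⁻¹ *ᵥ Pi.single k 1) := by
      rw [← mulVec_smul, ← hc, mulVec_mulVec, nonsing_inv_mul _ hd, one_mulVec]
    rw [hvn_eq]
    exact ⟨_, rfl⟩
  rw [show Finset.univ.gcd vn = 1 from hvn] at hdvd
  have hck : c k = -1 :=
    (Int.isUnit_iff.1 (isUnit_of_dvd_one hdvd)).resolve_left fun h1 => by linarith
  rw [hc, hck, neg_one_smul]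

structure IsEdgeBasisAt (P : Set (Fin n → ℝ)) (v : Fin n → ℝ) (d : Fin n → Fin n → ℤ) : Prop where
  isVertexOf : IsVertexOf P v
  isUnit_det : IsUnit (of d).det
  exists_edges : ∃ E : Fin n → Set (Fin n → ℝ),
    (∀ i, IsEdgeOf P (E i) ∧ v ∈ E i ∧ EdgeDirAt v (E i) (d i)) ∧
    ∀ E', IsEdgeOf P E' → v ∈ E' → ∃ i, E' = E i

variable {P : Set (Fin n → ℝ)} {V : Finset (Fin n → ℝ)} {g : Fin n → ℝ} {v c x : Fin n → ℝ}

lemma IsSmoothPolytope.exists_isEdgeBasisAt (hP : IsSmoothPolytope P) (hv : IsVertexOf P v) :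
    ∃ d, IsEdgeBasisAt P v d := by
  obtain ⟨-, E, d, -, hE, hEall, hd⟩ := hP v hv
  exact ⟨d, hv, hd, E, hE, hEall⟩

namespace IsEdgeBasisAt

lemma isPrimitiveZ (hd : IsEdgeBasisAt P v d) (k : Fin n) : IsPrimitiveZ (d k) := by
  obtain ⟨E, hE, -⟩ := hd.exists_edges
  exact (hE k).2.2.1

lemma exists_add_smul_mem (hd : IsEdgeBasisAt P v d) (k : Fin n) :
    ∃ r : ℝ, 0 < r ∧ v + r • (Int.cast ∘ d k : Fin n → ℝ) ∈ P := by
  obtain ⟨E, hE, -⟩ := hd.exists_edges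
  obtain ⟨-, w, hw, t, ht, hwv⟩ := (hE k).2.2
  refine ⟨t, ht, ?_⟩
  have : v + t • (Int.cast ∘ d k : Fin n → ℝ) = w := funext fun i => by
    simp [← hwv i]
  exact this ▸ (hE k).1.subset hw

lemma exists_sub_eq_smul (hd : IsEdgeBasisAt P v d) (hE : IsEdgeOf P (segment ℝ v c)) :
    ∃ k, ∃ t : ℝ, 0 < t ∧ c - v = t • (Int.cast ∘ d k : Fin n → ℝ) := by
  obtain ⟨E, hEd, hEall⟩ := hd.exists_edges
  obtain ⟨k, hk⟩ := hEall _ hE (left_mem_segment ℝ v c)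
  obtain ⟨hprim, w, hw, t, ht, hwv⟩ := (hEd k).2.2
  rw [← hk, segment_eq_image'] at hw
  obtain ⟨θ, ⟨hθ, -⟩, rfl⟩ := hw
  have hvec : θ • (c - v) = t • (Int.cast ∘ d k : Fin n → ℝ) := funext fun i => by
    simpa using hwv i
  have hθ : 0 < θ := by
    refine hθ.lt_of_ne fun h0 => intCast_comp_ne_zero hprim.ne_zero ?_
    rw [← h0, zero_smul] at hvec
    exact (smul_eq_zero.1 hvec.symm).resolve_left ht.ne'
  refine ⟨k, t / θ, div_pos ht hθ, ?_⟩
  rw [div_eq_inv_mul, mul_smul, ← hvec, smul_smul, inv_mul_cancel₀ hθ.ne', one_smul]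

lemma dotProduct_nonpos_of_mem_exposedFace (hd : IsEdgeBasisAt P v d)
    (hv : v ∈ exposedFace P g) (k : Fin n) : g ⬝ᵥ (Int.cast ∘ d k) ≤ 0 := by
  obtain ⟨r, hr, hmem⟩ := hd.exists_add_smul_mem k
  have := hv.2 _ hmem
  rw [dotProduct_add, dotProduct_smul, smul_eq_mul] at this
  nlinarith

/-- The tangent cone at `v` is spanned by the edge directions. -/
lemma dualVec_dotProduct_sub_nonneg (hd : IsEdgeBasisAt (convexHull ℝ (V : Set (Fin n → ℝ))) v d)
    (hx : x ∈ convexHull ℝ (V : Set (Fin n → ℝ))) (k : Fin n) : 0 ≤ dualVec d k ⬝ᵥ (x - v) := by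
  by_contra hneg
  have hlt : (-dualVec d k) ⬝ᵥ v < (-dualVec d k) ⬝ᵥ x := by
    rw [dotProduct_sub] at hneg
    simp only [neg_dotProduct]
    linarith
  obtain ⟨c, -, hE, hc⟩ := exists_isEdgeOf_dotProduct_lt hd.isVertexOf hx hlt
  obtain ⟨j, t, ht, hcj⟩ := hd.exists_sub_eq_smul hE
  have hval := congrArg (dualVec d k ⬝ᵥ ·) hcj
  simp only [dotProduct_sub, dotProduct_smul, dualVec_dotProduct hd.isUnit_det, smul_eq_mul]
    at hval
  simp only [neg_dotProduct] at hc
  split_ifs at hval <;> nlinarith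

lemma dualVec_dotProduct_sub_eq_zero
    (hd : IsEdgeBasisAt (convexHull ℝ (V : Set (Fin n → ℝ))) v d)
    (hx : x ∈ exposedFace (convexHull ℝ ↑V) g) (hv : v ∈ exposedFace (convexHull ℝ ↑V) g)
    {k : Fin n} (hk : g ⬝ᵥ (Int.cast ∘ d k) ≠ 0) : dualVec d k ⬝ᵥ (x - v) = 0 := by
  have hsum := dotProduct_eq_sum_dualVec hd.isUnit_det g (x - v)
  rw [dotProduct_sub, dotProduct_eq_of_mem_exposedFace hx hv, sub_self] at hsum
  have hterm := (Finset.sum_eq_zero_iff_of_nonpos fun j _ => mul_nonpos_of_nonneg_of_nonpos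
    (hd.dualVec_dotProduct_sub_nonneg hx.1 j) (hd.dotProduct_nonpos_of_mem_exposedFace hv j)).1
    hsum.symm k (Finset.mem_univ k)
  exact (mul_eq_zero.1 hterm).resolve_right hk

end IsEdgeBasisAt

end EdgeBasis

section Facets

variable {V : Finset (Fin n → ℝ)} {d : Fin n → Fin n → ℤ} {g : Fin n → ℝ} {v x : Fin n → ℝ}

namespace IsEdgeBasisAt

lemma mem_exposedFace_neg_dualVec_iff
    (hd : IsEdgeBasisAt (convexHull ℝ (V : Set (Fin n → ℝ))) v d) (k : Fin n) :
    x ∈ exposedFace (convexHull ℝ ↑V) (-dualVec d k) ↔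
      x ∈ convexHull ℝ (V : Set (Fin n → ℝ)) ∧ dualVec d k ⬝ᵥ (x - v) = 0 := by
  have hv := hd.isVertexOf.mem
  simp only [exposedFace, Set.mem_ofPred_eq, neg_dotProduct, neg_le_neg_iff, dotProduct_sub,
    sub_eq_zero]
  refine and_congr_right fun hx => ⟨fun h => le_antisymm (h v hv) ?_, fun h y hy => ?_⟩
  · linarith [hd.dualVec_dotProduct_sub_nonneg hx k, dotProduct_sub (dualVec d k) x v]
  · linarith [hd.dualVec_dotProduct_sub_nonneg hy k, dotProduct_sub (dualVec d k) y v]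

lemma isFacetOf_exposedFace_neg_dualVec
    (hd : IsEdgeBasisAt (convexHull ℝ (V : Set (Fin n → ℝ))) v d) (k : Fin n) :
    IsFacetOf (convexHull ℝ ↑V) (exposedFace (convexHull ℝ ↑V) (-dualVec d k)) := by
  set H := exposedFace (convexHull ℝ (V : Set (Fin n → ℝ))) (-dualVec d k)
  have hvH : v ∈ H := (hd.mem_exposedFace_neg_dualVec_iff k).2 ⟨hd.isVertexOf.mem, by simp⟩
  refine ⟨⟨_, rfl⟩, ⟨v, hvH⟩, ?_⟩
  -- `H` contains the edges at `v` in the directions `d j`, `j ≠ k`, and misses direction `d k`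
  have hlower : Submodule.span ℝ (Set.range fun j : {j // j ≠ k} => (Int.cast ∘ d j : Fin n → ℝ))
      ≤ vectorSpan ℝ H := by
    rw [Submodule.span_le]
    rintro _ ⟨⟨j, hj⟩, rfl⟩
    obtain ⟨r, hr, hmem⟩ := hd.exists_add_smul_mem j
    have hmemH : v + r • (Int.cast ∘ d j : Fin n → ℝ) ∈ H :=
      (hd.mem_exposedFace_neg_dualVec_iff k).2
        ⟨hmem, by simp [dotProduct_smul, dualVec_dotProduct hd.isUnit_det, hj]⟩
    have hspan := Submodule.smul_mem _ r⁻¹ (vsub_mem_vectorSpan ℝ hmemH hvH)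
    rwa [vsub_eq_sub, add_sub_cancel_left, smul_smul, inv_mul_cancel₀ hr.ne', one_smul] at hspan
  have hupper : vectorSpan ℝ H ≠ ⊤ := fun htop => by
    have hk := vectorSpan_exposedFace_le_ker _ _
      (htop ▸ Submodule.mem_top : (Int.cast ∘ d k : Fin n → ℝ) ∈ vectorSpan ℝ H)
    simp [dualVec_dotProduct hd.isUnit_det] at hk
  have h1 := Submodule.finrank_mono hlower
  have hrank : Module.finrank ℝ (Submodule.span ℝ (Set.range fun j : {j // j ≠ k} =>
      (Int.cast ∘ d j : Fin n → ℝ))) = Fintype.card {j // j ≠ k} :=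
    finrank_span_eq_card ((linearIndependent_intCast_comp hd.isUnit_det).comp _
      Subtype.val_injective)
  rw [hrank, Fintype.card_subtype_compl, Fintype.card_fin, Fintype.card_subtype_eq] at h1
  have h2 := Submodule.finrank_lt hupper
  rw [Module.finrank_fin_fun] at h2
  unfold dimSet
  omega

lemma vectorSpan_le_span (hd : IsEdgeBasisAt (convexHull ℝ (V : Set (Fin n → ℝ))) v d)
    (hv : v ∈ exposedFace (convexHull ℝ ↑V) g) [DecidablePred fun j => g ⬝ᵥ (Int.cast ∘ d j) = 0] :
    vectorSpan ℝ (exposedFace (convexHull ℝ ↑V) g) ≤ Submodule.span ℝ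
      ↑((Finset.univ.filter fun j => g ⬝ᵥ (Int.cast ∘ d j) = 0).image
        fun j => (Int.cast ∘ d j : Fin n → ℝ)) := by
  rw [vectorSpan_eq_span_vsub_set_right ℝ hv, Submodule.span_le]
  rintro _ ⟨x, hx, rfl⟩
  change x - v ∈ _
  rw [← sum_dualVec_smul hd.isUnit_det (x - v)]
  refine Submodule.sum_mem _ fun j _ => ?_
  by_cases hj : g ⬝ᵥ (Int.cast ∘ d j) = 0
  · exact Submodule.smul_mem _ _ (Submodule.subset_span
      (Finset.mem_coe.2 (Finset.mem_image.2 ⟨j, by simp [hj], rfl⟩)))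
  · rw [hd.dualVec_dotProduct_sub_eq_zero hx hv hj, zero_smul]
    exact Submodule.zero_mem _

/-- At a smooth vertex, the normal of a facet through it is minus a dual basis vector. -/
lemma exists_mulVec_eq_neg_single
    (hd : IsEdgeBasisAt (convexHull ℝ (V : Set (Fin n → ℝ))) v d) {G : Set (Fin n → ℝ)}
    {vn : Fin n → ℤ} (hG : IsFacetNormal (convexHull ℝ ↑V) G vn) (hvG : v ∈ G) :
    ∃ k, of d *ᵥ vn = -Pi.single k 1 := by
  classical
  set c := of d *ᵥ vn
  have hunit : IsUnit (of d) := (of d).isUnit_iff_isUnit_det.2 hd.isUnit_det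
  have hGexp := hG.eq_exposedFace
  rw [hGexp] at hvG
  have hc_nonpos : ∀ j, c j ≤ 0 := fun j => by
    have := hd.dotProduct_nonpos_of_mem_exposedFace hvG j
    rw [← intCast_mulVec_apply] at this
    exact_mod_cast this
  have hc_eq : ∀ j, (c j = 0 ↔ (Int.cast ∘ vn : Fin n → ℝ) ⬝ᵥ (Int.cast ∘ d j) = 0) := fun j => by
    rw [← intCast_mulVec_apply, Int.cast_eq_zero]
  -- a facet lies in the span of the edges it contains, so at most one `c j` is nonzero
  have hcard : (Finset.univ.filter fun j => ¬c j = 0).card ≤ 1 := by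
    have h1 := Submodule.finrank_mono (hd.vectorSpan_le_span hvG)
    have h2 := (finrank_span_finset_le_card (R := ℝ) ((Finset.univ.filter fun j =>
      (Int.cast ∘ vn : Fin n → ℝ) ⬝ᵥ (Int.cast ∘ d j) = 0).image
        fun j => (Int.cast ∘ d j : Fin n → ℝ))).trans Finset.card_image_le
    have h3 := Finset.card_filter_add_card_filter_not (s := Finset.univ) fun j => c j = 0
    have h4 := hG.2.1.2.2
    simp only [Finset.card_univ, Fintype.card_fin] at h3
    simp only [← hc_eq, Set.finrank] at h1 h2
    rw [← hGexp] at h1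
    unfold dimSet at h4
    omega
  obtain ⟨k, hk⟩ : ∃ k, c k ≠ 0 := by
    by_contra! h0
    exact hG.1.ne_zero (mulVec_injective_of_isUnit hunit (by rw [mulVec_zero]; exact funext h0))
  refine ⟨k, mulVec_eq_neg_single_of_isPrimitiveZ hd.isUnit_det hG.1 (fun j hjk => ?_)
    (hc_nonpos k)⟩
  by_contra hj
  exact hjk (Finset.card_le_one.1 hcard j (Finset.mem_filter.2 ⟨Finset.mem_univ j, hj⟩) k
    (Finset.mem_filter.2 ⟨Finset.mem_univ k, hk⟩))

end IsEdgeBasisAt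

end Facets

section CentralNormal

variable {P F : Set (Fin n → ℝ)} {V : Finset (Fin n → ℝ)} {d : Fin n → Fin n → ℤ}
  {u : Fin n → ℤ} {g : Fin n → ℝ} {q a c : Fin n → ℝ}

lemma IsCentralNormal.subset_exposedFace (hu : IsCentralNormal P F u) (hF : F ⊆ P) :
    F ⊆ exposedFace P (Int.cast ∘ u) := by
  obtain ⟨m, Fs, us, -, hFs, -, rfl⟩ := hu
  have hcast : (Int.cast ∘ ∑ i, us i : Fin n → ℝ) = ∑ i, Int.cast ∘ us i := by
    ext j
    simp
  intro x hx
  refine ⟨hF hx, fun y hy => ?_⟩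
  rw [hcast, sum_dotProduct, sum_dotProduct]
  exact Finset.sum_le_sum fun i _ => ((hFs i).2.eq_exposedFace ▸ (hFs i).1 hx).2 y hy

lemma IsCentralNormal.neg_one_le_mulVec_apply
    (hu : IsCentralNormal (convexHull ℝ (V : Set (Fin n → ℝ))) F u)
    (hd : IsEdgeBasisAt (convexHull ℝ (V : Set (Fin n → ℝ))) q d) (hqF : q ∈ F) (j : Fin n) :
    -1 ≤ (of d *ᵥ u) j := by
  classical
  obtain ⟨m, Fs, us, hinj, hFs, -, rfl⟩ := hu
  choose k hk using fun i => hd.exists_mulVec_eq_neg_single (hFs i).2 ((hFs i).1 hqF)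
  -- distinct facets through `q` have distinct normals, hence distinct indices `k i`
  have hkinj : Function.Injective k := fun i i' h => hinj <| by
    rw [(hFs i).2.eq_exposedFace, (hFs i').2.eq_exposedFace,
      mulVec_injective_of_isUnit ((of d).isUnit_iff_isUnit_det.2 hd.isUnit_det)
        ((hk i).trans (h ▸ (hk i').symm))]
  have hcount : (Finset.univ.filter fun i => j = k i).card ≤ 1 :=
    Finset.card_le_one.2 fun i hi i' hi' => hkinj <| by
      rw [← (Finset.mem_filter.1 hi).2, ← (Finset.mem_filter.1 hi').2]
  simp only [mulVec_sum, Finset.sum_apply, hk, Pi.neg_apply, Pi.single_apply,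
    Finset.sum_neg_distrib, Finset.sum_boole]
  omega

lemma IsCentralNormal.dotProduct_eq_zero_of_mulVec_apply_eq_zero
    (hu : IsCentralNormal (convexHull ℝ (V : Set (Fin n → ℝ))) (exposedFace (convexHull ℝ ↑V) g) u)
    (hd : IsEdgeBasisAt (convexHull ℝ (V : Set (Fin n → ℝ))) q d)
    (hqF : q ∈ exposedFace (convexHull ℝ ↑V) g) {j : Fin n} (hj : (of d *ᵥ u) j = 0) :
    g ⬝ᵥ (Int.cast ∘ d j) = 0 := by
  by_contra hgj
  -- otherwise the face lies in the facet opposite to `d j`, whose normal is negative on `d j`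
  obtain ⟨m, Fs, us, -, hFs, hall, rfl⟩ := hu
  obtain ⟨i, hi⟩ := hall _ (hd.isFacetOf_exposedFace_neg_dualVec j) fun x hx =>
    (hd.mem_exposedFace_neg_dualVec_iff j).2 ⟨hx.1, hd.dualVec_dotProduct_sub_eq_zero hx hqF hgj⟩
  have hqi := (hFs i).2.eq_exposedFace ▸ (hFs i).1 hqF
  have hnonpos : ∀ i', (of d *ᵥ us i') j ≤ 0 := fun i' => by
    have := hd.dotProduct_nonpos_of_mem_exposedFace ((hFs i').2.eq_exposedFace ▸ (hFs i').1 hqF) j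
    rw [← intCast_mulVec_apply] at this
    exact_mod_cast this
  have hzero : ∀ j', j' ≠ j → (of d *ᵥ us i) j' = 0 := fun j' hj' => by
    obtain ⟨r, hr, hmem⟩ := hd.exists_add_smul_mem j'
    have hmemH : q + r • (Int.cast ∘ d j' : Fin n → ℝ) ∈ Fs i := hi ▸
      (hd.mem_exposedFace_neg_dualVec_iff j).2
        ⟨hmem, by simp [dotProduct_smul, dualVec_dotProduct hd.isUnit_det, hj']⟩
    have heq := dotProduct_eq_of_mem_exposedFace ((hFs i).2.eq_exposedFace ▸ hmemH) hqi
    rw [dotProduct_add, dotProduct_smul, smul_eq_mul, add_eq_left, ← intCast_mulVec_apply] at heq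
    exact_mod_cast (mul_eq_zero.1 heq).resolve_left hr.ne'
  have hneg : (of d *ᵥ us i) j < 0 := (hnonpos i).lt_of_ne fun h0 => (hFs i).2.1.ne_zero <|
    mulVec_injective_of_isUnit ((of d).isUnit_iff_isUnit_det.2 hd.isUnit_det) <| by
      rw [mulVec_zero]
      ext j'
      by_cases hj' : j' = j
      · rw [hj', h0]; rfl
      · exact hzero j' hj'
  have hsum : (of d *ᵥ ∑ i', us i') j < 0 := by
    classical
    rw [mulVec_sum, Finset.sum_apply, ← Finset.add_sum_erase _ _ (Finset.mem_univ i)]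
    linarith [Finset.sum_nonpos fun i' (_ : i' ∈ Finset.univ.erase i) => hnonpos i']
  exact hsum.ne hj

theorem IsCentralNormal.exposedFace_eq
    (hu : IsCentralNormal (convexHull ℝ (V : Set (Fin n → ℝ))) F u)
    (hsm : IsSmoothPolytope (convexHull ℝ (V : Set (Fin n → ℝ))))
    (hF : IsFaceOf (convexHull ℝ (V : Set (Fin n → ℝ))) F) (hV : V.Nonempty) :
    exposedFace (convexHull ℝ ↑V) (Int.cast ∘ u) = F := by
  obtain ⟨g, rfl⟩ := isFaceOf_iff.1 hF
  refine subset_antisymm (fun x hx => ?_) (hu.subset_exposedFace exposedFace_subset)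
  obtain ⟨q, hq, hqv⟩ := exists_isVertexOf_mem_maxSet hV g
  have hqF := maxSet_subset_exposedFace hq
  obtain ⟨d, hd⟩ := hsm.exists_isEdgeBasisAt hqv
  -- `x - q` only has components along edges at `q` that stay inside the face
  have hgx : g ⬝ᵥ (x - q) = 0 := by
    rw [dotProduct_eq_sum_dualVec hd.isUnit_det]
    refine Finset.sum_eq_zero fun j _ => ?_
    by_cases hj : (of d *ᵥ u) j = 0
    · rw [hu.dotProduct_eq_zero_of_mulVec_apply_eq_zero hd hqF hj, mul_zero]
    · rw [hd.dualVec_dotProduct_sub_eq_zero hx (hu.subset_exposedFace exposedFace_subset hqF)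
        (by rwa [← intCast_mulVec_apply, Int.cast_ne_zero]), zero_mul]
  rw [dotProduct_sub, sub_eq_zero] at hgx
  exact mem_exposedFace_of_dotProduct_eq hqF hx.1 hgx

theorem IsCentralNormal.dotZ_eq_sub_of_latticeLength
    (hu : IsCentralNormal (convexHull ℝ (V : Set (Fin n → ℝ))) F u)
    (hsm : IsSmoothPolytope (convexHull ℝ (V : Set (Fin n → ℝ))))
    (hF : IsFaceOf (convexHull ℝ (V : Set (Fin n → ℝ))) F) (hV : V.Nonempty)
    (ha : IsVertexOf (convexHull ℝ (V : Set (Fin n → ℝ))) a)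
    (hE : IsEdgeOf (convexHull ℝ (V : Set (Fin n → ℝ))) (segment ℝ a c)) (haF : a ∈ F)
    (hcF : c ∉ F) {ℓ : ℕ} (hℓ : LatticeLength a c ℓ) : dotZ u c = dotZ u a - ℓ := by
  have hexp := hu.exposedFace_eq hsm hF hV
  obtain ⟨d, hd⟩ := hsm.exists_isEdgeBasisAt ha
  obtain ⟨e, he, hca⟩ := hℓ
  have hca' : c - a = (ℓ : ℝ) • (Int.cast ∘ e : Fin n → ℝ) := funext fun i => by simp [hca i]
  have hℓpos : 0 < (ℓ : ℝ) := (Nat.cast_nonneg ℓ).lt_of_ne fun h0 => hcF <| by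
    have hca0 : c - a = 0 := by rw [hca', ← h0, zero_smul]
    rwa [sub_eq_zero.1 hca0]
  obtain ⟨k, t, ht, hck⟩ := hd.exists_sub_eq_smul hE
  obtain rfl : e = d k := he.eq_of_smul_eq_smul (hd.isPrimitiveZ k) hℓpos ht (hca'.symm.trans hck)
  have hdiff : dotZ u c - dotZ u a = ℓ * ((of d *ᵥ u) k : ℝ) := by
    rw [dotZ_eq_dotProduct, dotZ_eq_dotProduct, ← dotProduct_sub, hca', dotProduct_smul,
      intCast_mulVec_apply, smul_eq_mul]
  -- `u` decreases strictly along the edge leaving `F`, in integer steps of at most one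
  have hlt : dotZ u c < dotZ u a := dotProduct_lt_of_notMem_exposedFace (hexp ▸ haF)
    (hE.subset (right_mem_segment ℝ a c)) (hexp ▸ hcF)
  have hneg : (of d *ᵥ u) k < 0 := by
    by_contra! h
    have : (0 : ℝ) ≤ (of d *ᵥ u) k := by exact_mod_cast h
    nlinarith
  have hone : (of d *ᵥ u) k = -1 := by
    have := hu.neg_one_le_mulVec_apply hd haF k
    omega
  rw [hone, Int.cast_neg, Int.cast_one] at hdiff
  linarith

end CentralNormal

theorem blowup_size_iff_edge_lengths_general {n : ℕ} (P F : Set (Fin n → ℝ))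
    (hP : IsLatticePolytope P) (hsm : IsSmoothPolytope P)
    (hF : IsFaceOf P F) (u : Fin n → ℤ) (hu : IsCentralNormal P F u)
    (b : ℝ) (hb : IsGreatest ((fun x => dotZ u x) '' P) b)
    (ε : ℝ) :
    (∀ v, IsVertexOf P v → v ∉ F → dotZ u v < b - ε) ↔
    (∀ a c ℓ, IsVertexOf P a → IsVertexOf P c →
      IsEdgeOf P (segment ℝ a c) → a ∈ F → c ∉ F →
      LatticeLength a c ℓ → ε < (ℓ : ℝ)) := by
  classical
  obtain ⟨V, hVlat, rfl, -⟩ := hP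
  obtain ⟨x₀, hx₀, rfl⟩ := hb.1
  have hV : V.Nonempty := Finset.coe_nonempty.1 (convexHull_nonempty_iff.1 ⟨x₀, hx₀⟩)
  have hexp := hu.exposedFace_eq hsm hF hV
  subst hexp
  set F := exposedFace (convexHull ℝ (V : Set (Fin n → ℝ))) (Int.cast ∘ u)
  have hx₀F : x₀ ∈ F := ⟨hx₀, fun y hy => hb.2 ⟨y, hy, rfl⟩⟩
  have hFb : ∀ x ∈ F, dotZ u x = dotZ u x₀ := fun x hx =>
    dotProduct_eq_of_mem_exposedFace hx hx₀F
  constructor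
  · intro hL a c ℓ ha hc hE haF hcF hℓ
    have := hL c hc hcF
    rw [hu.dotZ_eq_sub_of_latticeLength hsm hF hV ha hE haF hcF hℓ, hFb a haF] at this
    linarith
  · intro hR v hv hvF
    obtain ⟨w, hw, hwmax⟩ := (V.filter fun x => IsVertexOf (convexHull ℝ ↑V) x ∧ x ∉ F)
      |>.exists_max_image (dotZ u) ⟨v, Finset.mem_filter.2 ⟨hv.mem_finset, hv, hvF⟩⟩
    obtain ⟨-, hwv, hwF⟩ := Finset.mem_filter.1 hw
    obtain ⟨c, hcF, hc, hE⟩ := exists_isEdgeOf_segment_of_forall_dotProduct_le hwv hwF ⟨x₀, hx₀F⟩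
      fun c hc hcF => hwmax c (Finset.mem_filter.2 ⟨hc.mem_finset, hc, hcF⟩)
    obtain ⟨ℓ, hℓ⟩ := exists_latticeLength (hVlat c hc.mem_finset) (hVlat w hwv.mem_finset)
      (ne_of_mem_of_not_mem hcF hwF)
    have hdrop := hu.dotZ_eq_sub_of_latticeLength hsm hF hV hc hE hcF hwF hℓ
    linarith [hR c w ℓ hc hwv hE hcF hwF hℓ, hwmax v (Finset.mem_filter.2 ⟨hv.mem_finset, hv, hvF⟩),
      hFb c hcF]

/-- Lemma 3.4: in a smooth lattice polytope `P`, with `F` a face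
with central normal `u`, supporting value `b = max_{x ∈ P} u·x` and `ε > 0`,
every vertex of `P` not in `F` satisfies `u·v < b - ε` if and only if every
edge with exactly one endpoint in `F` has lattice length strictly greater
than `ε`. -/
theorem blowup_size_iff_edge_lengths {n : ℕ} (P F : Set (Fin n → ℝ))
    (hP : IsLatticePolytope P) (hsm : IsSmoothPolytope P)
    (hF : IsFaceOf P F) (u : Fin n → ℤ) (hu : IsCentralNormal P F u)
    (b : ℝ) (hb : IsGreatest ((fun x => dotZ u x) '' P) b)
    (ε : ℝ) (hε : 0 < ε) :
    (∀ v, IsVertexOf P v → v ∉ F → dotZ u v < b - ε) ↔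
    (∀ a c ℓ, IsVertexOf P a → IsVertexOf P c →
      IsEdgeOf P (segment ℝ a c) → a ∈ F → c ∉ F →
      LatticeLength a c ℓ → ε < (ℓ : ℝ)) :=
  blowup_size_iff_edge_lengths_general P F hP hsm hF u hu b hb ε
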